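/- The generating function t(λ) = h(λ)² − 2h′(λ) + 2(2X⁻(λ) + ξ)X⁺(λ) of the twisted Gaudin model admits the pole expansion t(λ) = ∑_{a=1}^{N} ( c₂(a)/(λ − z_a)² + 2H^(a)/(λ − z_a) ) + ξ² ∑_{a,b=1}^{N} X⁺_a X⁺_b, where c₂(a) = h_a² + 2h_a + 4X⁻_a X⁺_a and H^(a) = ∑_{b≠a} ( (h_a h_b + 2(X⁺_a X⁻_b + X⁻_a X⁺_b))/(z_a − z_b) + ξ(h_a X⁺_b − X⁺_a h_b) ). -/

import Mathlib

open Finset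

variable {H : Type*} [NormedAddCommGroup H] [NormedSpace ℂ H]

/-- h(λ) = ∑_a (h_a/(λ−z_a) + ξX⁺_a) -/
noncomputable def hTw {N : ℕ} (z : Fin N → ℂ) (ξ : ℂ)
    (hA XpA : Fin N → (H →L[ℂ] H)) (lam : ℂ) : H →L[ℂ] H :=
  ∑ a, ((lam - z a)⁻¹ • hA a + ξ • XpA a)

/-- X⁺(λ) = ∑_a X⁺_a/(λ−z_a) -/
noncomputable def XpL {N : ℕ} (z : Fin N → ℂ)
    (XpA : Fin N → (H →L[ℂ] H)) (lam : ℂ) : H →L[ℂ] H :=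
  ∑ a, (lam - z a)⁻¹ • XpA a

/-- X⁻(λ) = ∑_a (X⁻_a/(λ−z_a) − (ξ/2)h_a) -/
noncomputable def XmL {N : ℕ} (z : Fin N → ℂ) (ξ : ℂ)
    (XmA hA : Fin N → (H →L[ℂ] H)) (lam : ℂ) : H →L[ℂ] H :=
  ∑ a, ((lam - z a)⁻¹ • XmA a - (ξ / 2) • hA a)

/-- the twisted generating function t(λ) = h(λ)² − 2h′(λ) + 2(2X⁻(λ)+ξ)X⁺(λ) -/
noncomputable def tTw {N : ℕ} (z : Fin N → ℂ) (ξ : ℂ)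
    (hA XpA XmA : Fin N → (H →L[ℂ] H)) (lam : ℂ) : H →L[ℂ] H :=
  hTw z ξ hA XpA lam * hTw z ξ hA XpA lam
    - (2 : ℂ) • deriv (hTw z ξ hA XpA) lam
    + (2 : ℂ) • (((2 : ℂ) • XmL z ξ XmA hA lam + ξ • (1 : H →L[ℂ] H)) * XpL z XpA lam)

/-!
Multiplying out `h(λ)²` and `(2X⁻(λ) + ξ)X⁺(λ)` writes `t(λ)` as a double sum over pairs of
sites `(a, b)`, the single sums `−2h′(λ)` and `2ξX⁺(λ)` being placed on the diagonal. On the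
diagonal, `[h_a, X⁺_a] = 2X⁺_a` collapses the term to `c₂(a)/(λ − z_a)² + ξ²X⁺_aX⁺_a`. Off the
diagonal only the sum of the `(a, b)` and `(b, a)` terms matches the pole expansion: operators at
distinct sites commute, and the partial fraction decomposition
`1/((λ − z_a)(λ − z_b)) = (1/(λ − z_a) − 1/(λ − z_b))/(z_a − z_b)` turns the products of simple
poles into the simple poles of `H^(a)` and `H^(b)`.
-/

theorem Finset.sum_sum_eq_of_add_swap {ι R M : Type*} [Semiring R] [Invertible (2 : R)]
    [AddCommMonoid M] [Module R M] (s : Finset ι) {f g : ι → ι → M}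
    (h : ∀ a ∈ s, ∀ b ∈ s, f a b + f b a = g a b + g b a) :
    ∑ a ∈ s, ∑ b ∈ s, f a b = ∑ a ∈ s, ∑ b ∈ s, g a b := by
  have two_smul_sum_sum (F : ι → ι → M) :
      (2 : R) • ∑ a ∈ s, ∑ b ∈ s, F a b = ∑ a ∈ s, ∑ b ∈ s, (F a b + F b a) := by
    rw [two_smul]
    nth_rewrite 2 [sum_comm]
    simp only [← sum_add_distrib]
  have h2 : (2 : R) • ∑ a ∈ s, ∑ b ∈ s, f a b = (2 : R) • ∑ a ∈ s, ∑ b ∈ s, g a b := by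
    simp only [two_smul_sum_sum]
    exact sum_congr rfl fun a ha => sum_congr rfl fun b hb => h a ha b hb
  simpa [smul_smul] using congrArg ((⅟2 : R) • ·) h2

theorem Commute.of_sub_eq_ite {ι A : Type*} [DecidableEq ι] [Ring A] {x y c : ι → A}
    (h : ∀ a b, x a * y b - y b * x a = if a = b then c a else 0) {a b : ι} (hab : a ≠ b) :
    Commute (x a) (y b) :=
  sub_eq_zero.mp (by simpa [hab] using h a b)

section PoleExpansion

variable {K A : Type*} [Field K] [Ring A] [Algebra K A] {N : ℕ} (z : Fin N → K) (ξ lam : K)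
  (hA XpA XmA : Fin N → A)

noncomputable def tTwTerm (a b : Fin N) : A :=
  ((lam - z a)⁻¹ • hA a + ξ • XpA a) * ((lam - z b)⁻¹ • hA b + ξ • XpA b)
    + (4 * (lam - z a)⁻¹ * (lam - z b)⁻¹) • (XmA a * XpA b)
    - (2 * ξ * (lam - z b)⁻¹) • (hA a * XpA b)
    + if a = b then (2 * ((lam - z a) ^ 2)⁻¹) • hA a + (2 * ξ * (lam - z a)⁻¹) • XpA a else 0

noncomputable def poleTerm (a b : Fin N) : A :=
  (if a = b then
      ((lam - z a) ^ 2)⁻¹ • (hA a * hA a + (2 : K) • hA a + (4 : K) • (XmA a * XpA a))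
    else
      (2 * (lam - z a)⁻¹) •
        ((z a - z b)⁻¹ • (hA a * hA b + (2 : K) • (XpA a * XmA b + XmA a * XpA b))
          + ξ • (hA a * XpA b - XpA a * hA b)))
    + ξ ^ 2 • (XpA a * XpA b)

theorem tTwTerm_self {a : Fin N} (hhXp : hA a * XpA a - XpA a * hA a = (2 : K) • XpA a) :
    tTwTerm z ξ lam hA XpA XmA a a = poleTerm z ξ lam hA XpA XmA a a := by
  rw [sub_eq_iff_eq_add] at hhXp
  simp only [tTwTerm, poleTerm, if_true, add_mul, mul_add, smul_mul_assoc, mul_smul_comm,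
    ← inv_pow, hhXp]
  match_scalars <;> ring

theorem tTwTerm_add_swap {a b : Fin N} (ha : lam ≠ z a) (hb : lam ≠ z b) (hab : z a ≠ z b)
    (hhh : Commute (hA a) (hA b))
    (hhXp_ab : Commute (hA a) (XpA b)) (hhXp_ba : Commute (hA b) (XpA a))
    (hXpXm_ab : Commute (XpA a) (XmA b)) (hXpXm_ba : Commute (XpA b) (XmA a))
    (hXpXp : Commute (XpA a) (XpA b)) :
    tTwTerm z ξ lam hA XpA XmA a b + tTwTerm z ξ lam hA XpA XmA b a =
      poleTerm z ξ lam hA XpA XmA a b + poleTerm z ξ lam hA XpA XmA b a := by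
  have hne : a ≠ b := fun h => hab (congrArg z h)
  have ha' : lam - z a ≠ 0 := sub_ne_zero.mpr ha
  have hb' : lam - z b ≠ 0 := sub_ne_zero.mpr hb
  have hab' : z a - z b ≠ 0 := sub_ne_zero.mpr hab
  have hba' : z b - z a ≠ 0 := sub_ne_zero.mpr hab.symm
  simp only [tTwTerm, poleTerm, if_neg hne, if_neg hne.symm, add_zero, add_mul, mul_add,
    smul_mul_assoc, mul_smul_comm, hhh.symm.eq, hhXp_ab.eq, hhXp_ba.eq, hXpXm_ab.eq,
    hXpXm_ba.eq, hXpXp.symm.eq]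
  match_scalars <;> field_simp <;> ring

theorem sum_sum_poleTerm :
    ∑ a, ∑ b, poleTerm z ξ lam hA XpA XmA a b =
      ∑ a, (((lam - z a) ^ 2)⁻¹ •
              (hA a * hA a + (2 : K) • hA a + (4 : K) • (XmA a * XpA a))
            + (2 * (lam - z a)⁻¹) •
              ∑ b ∈ Finset.univ.erase a,
                ((z a - z b)⁻¹ •
                    (hA a * hA b + (2 : K) • (XpA a * XmA b + XmA a * XpA b))
                  + ξ • (hA a * XpA b - XpA a * hA b)))
        + ξ ^ 2 • ∑ a, ∑ b, XpA a * XpA b := by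
  simp only [poleTerm, sum_add_distrib, ← smul_sum, sum_ite, filter_eq, filter_ne, mem_univ,
    if_true, sum_singleton]

end PoleExpansion

theorem hasDerivAt_hTw {N : ℕ} (z : Fin N → ℂ) (ξ : ℂ) (hA XpA : Fin N → (H →L[ℂ] H))
    {lam : ℂ} (hlam : ∀ a, lam ≠ z a) :
    HasDerivAt (hTw z ξ hA XpA) (-∑ a, ((lam - z a) ^ 2)⁻¹ • hA a) lam := by
  rw [← sum_neg_distrib]
  refine HasDerivAt.fun_sum fun a _ => ?_
  have hinv := (hasDerivAt_inv (sub_ne_zero.mpr (hlam a))).comp_sub_const lam (z a)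
  simpa using (hinv.smul_const (hA a)).add_const (ξ • XpA a)

theorem tTw_eq_sum_sum_tTwTerm {N : ℕ} (z : Fin N → ℂ) (ξ : ℂ)
    (hA XpA XmA : Fin N → (H →L[ℂ] H)) {lam : ℂ} (hlam : ∀ a, lam ≠ z a) :
    tTw z ξ hA XpA XmA lam = ∑ a, ∑ b, tTwTerm z ξ lam hA XpA XmA a b := by
  have diag (d : Fin N → H →L[ℂ] H) : ∑ a, d a = ∑ a, ∑ b, if a = b then d a else 0 := by simp
  rw [tTw, (hasDerivAt_hTw z ξ hA XpA hlam).deriv, hTw, XmL, XpL]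
  simp only [add_mul, sum_mul_sum, smul_mul_assoc, one_mul, smul_sum]
  rw [diag fun a => ((lam - z a) ^ 2)⁻¹ • hA a, diag fun a => ξ • (lam - z a)⁻¹ • XpA a]
  simp only [smul_sum, ← sum_neg_distrib, ← sum_sub_distrib, ← sum_add_distrib]
  refine sum_congr rfl fun a _ => sum_congr rfl fun b _ => ?_
  rcases eq_or_ne a b with rfl | hab
  · simp only [tTwTerm, if_true, mul_add, add_mul, sub_mul, smul_mul_assoc, mul_smul_comm]
    module
  · simp only [tTwTerm, if_neg hab, mul_add, add_mul, sub_mul, smul_mul_assoc, mul_smul_comm]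
    module

theorem tTw_pole_expansion_general
    (N : ℕ) (z : Fin N → ℂ) (hz : Function.Injective z) (ξ : ℂ)
    (hA XpA XmA : Fin N → (H →L[ℂ] H))
    (hhh : ∀ a b, hA a * hA b = hA b * hA a)
    (hhXp : ∀ a b, hA a * XpA b - XpA b * hA a = if a = b then (2 : ℂ) • XpA a else 0)
    (hXpXm : ∀ a b, XpA a * XmA b - XmA b * XpA a = if a = b then hA a else 0)
    (hXpXp : ∀ a b, XpA a * XpA b = XpA b * XpA a)
    (lam : ℂ) (hlam : ∀ a, lam ≠ z a) :
    tTw z ξ hA XpA XmA lam =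
      ∑ a, (((lam - z a) ^ 2)⁻¹ •
              (hA a * hA a + (2 : ℂ) • hA a + (4 : ℂ) • (XmA a * XpA a))
            + (2 * (lam - z a)⁻¹) •
              ∑ b ∈ Finset.univ.erase a,
                ((z a - z b)⁻¹ •
                    (hA a * hA b + (2 : ℂ) • (XpA a * XmA b + XmA a * XpA b))
                  + ξ • (hA a * XpA b - XpA a * hA b)))
        + ξ ^ 2 • ∑ a, ∑ b, XpA a * XpA b := by
  have hsymm : ∀ a ∈ univ, ∀ b ∈ univ,
      tTwTerm z ξ lam hA XpA XmA a b + tTwTerm z ξ lam hA XpA XmA b a =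
        poleTerm z ξ lam hA XpA XmA a b + poleTerm z ξ lam hA XpA XmA b a := by
    intro a _ b _
    rcases eq_or_ne a b with rfl | hab
    · rw [tTwTerm_self z ξ lam hA XpA XmA (by simpa using hhXp a a)]
    · exact tTwTerm_add_swap z ξ lam hA XpA XmA (hlam a) (hlam b) (hz.ne hab) (hhh a b)
        (.of_sub_eq_ite hhXp hab) (.of_sub_eq_ite hhXp hab.symm) (.of_sub_eq_ite hXpXm hab)
        (.of_sub_eq_ite hXpXm hab.symm) (hXpXp a b)
  rw [tTw_eq_sum_sum_tTwTerm z ξ hA XpA XmA hlam, univ.sum_sum_eq_of_add_swap (R := ℂ) hsymm,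
    sum_sum_poleTerm]

/-- the pole expansion
    t(λ) = ∑_a ( c₂(a)/(λ−z_a)² + 2H^(a)/(λ−z_a) ) + ξ² ∑_{a,b} X⁺_aX⁺_b, with
    c₂(a) = h_a² + 2h_a + 4X⁻_aX⁺_a and
    H^(a) = ∑_{b≠a} ( (h_ah_b + 2(X⁺_aX⁻_b + X⁻_aX⁺_b))/(z_a−z_b) + ξ(h_aX⁺_b − X⁺_ah_b) ). -/
theorem tTw_pole_expansion
    (N : ℕ) (z : Fin N → ℂ) (hz : Function.Injective z) (ξ : ℂ)
    (hA XpA XmA : Fin N → (H →L[ℂ] H))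
    (hhh : ∀ a b, hA a * hA b = hA b * hA a)
    (hhXp : ∀ a b, hA a * XpA b - XpA b * hA a = if a = b then (2 : ℂ) • XpA a else 0)
    (hhXm : ∀ a b, hA a * XmA b - XmA b * hA a = if a = b then (-2 : ℂ) • XmA a else 0)
    (hXpXm : ∀ a b, XpA a * XmA b - XmA b * XpA a = if a = b then hA a else 0)
    (hXpXp : ∀ a b, XpA a * XpA b = XpA b * XpA a)
    (hXmXm : ∀ a b, XmA a * XmA b = XmA b * XmA a)
    (lam : ℂ) (hlam : ∀ a, lam ≠ z a) :
    tTw z ξ hA XpA XmA lam =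
      ∑ a, (((lam - z a) ^ 2)⁻¹ •
              (hA a * hA a + (2 : ℂ) • hA a + (4 : ℂ) • (XmA a * XpA a))
            + (2 * (lam - z a)⁻¹) •
              ∑ b ∈ Finset.univ.erase a,
                ((z a - z b)⁻¹ •
                    (hA a * hA b + (2 : ℂ) • (XpA a * XmA b + XmA a * XpA b))
                  + ξ • (hA a * XpA b - XpA a * hA b)))
        + ξ ^ 2 • ∑ a, ∑ b, XpA a * XpA b :=
  tTw_pole_expansion_general N z hz ξ hA XpA XmA hhh hhXp hXpXm hXpXp lam hlam
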